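/- Skeleton approximation exactness for finite-rank functions: let G(s,t) = Σ_{k=1}^{r} uₖ(s)vₖ(t) and suppose points s₁,…,s_r and t₁,…,t_r are such that the r×r matrix M with M(a,b) = G(sₐ,t_b) is invertible. Then for all (s,t) ∈ [0,1]², G(s,t) = g_row(s) M⁻¹ g_col(t), where g_row(s) = (G(s,t₁),…,G(s,t_r)) and g_col(t) = (G(s₁,t),…,G(s_r,t))ᵀ. -/

import Mathlib

/-! Writing `G s t = x(s) ⬝ y(t)` with `x(s) = (uₖ(s))ₖ`, `y(t) = (vₖ(t))ₖ`, the pivot matrix factors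
as `M = A * B`, where the rows of `A` are `x(sₐ)` and the columns of `B` are `y(t_b)`. Both factors
are square, so `det M ≠ 0` makes them invertible and `B M⁻¹ A = 1`. Since `g_row(s) = x(s) B` and
`g_col(t) = A y(t)`, we get `g_row(s) M⁻¹ g_col(t) = x(s) (B M⁻¹ A) y(t) = G s t`. -/

open Matrix

namespace Matrix

variable {ι R : Type*} [Fintype ι] [DecidableEq ι] [CommRing R]

theorem mul_inv_mul_mul_cancel {A B : Matrix ι ι R} (h : IsUnit (A * B).det) :
    B * (A * B)⁻¹ * A = 1 := by
  rw [det_mul, IsUnit.mul_iff] at h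
  rw [mul_inv_rev, ← Matrix.mul_assoc, mul_nonsing_inv B h.2, Matrix.one_mul,
    nonsing_inv_mul A h.1]

end Matrix

section CrossApproximation

variable {α β ι R : Type*} [Fintype ι] [CommRing R]
  {G : α → β → R} {u : ι → α → R} {v : ι → β → R}

theorem pivot_eq_mul (hG : ∀ s t, G s t = ∑ k, u k s * v k t) (sp : ι → α) (tp : ι → β) :
    Matrix.of (fun a b => G (sp a) (tp b)) =
      Matrix.of (fun a k => u k (sp a)) * Matrix.of (fun k b => v k (tp b)) := by
  ext a b
  simp only [of_apply, mul_apply, hG]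

theorem cross_approximation_exact [DecidableEq ι] (hG : ∀ s t, G s t = ∑ k, u k s * v k t)
    {sp : ι → α} {tp : ι → β} (hM : IsUnit (Matrix.of fun a b => G (sp a) (tp b)).det)
    (s : α) (t : β) :
    G s t = (fun a => G s (tp a)) ⬝ᵥ
      ((Matrix.of fun a b => G (sp a) (tp b))⁻¹ *ᵥ fun b => G (sp b) t) := by
  set A := Matrix.of fun a k => u k (sp a)
  set B := Matrix.of fun k b => v k (tp b)
  have hrow : (fun a => G s (tp a)) = (fun k => u k s) ᵥ* B := by
    ext a; simp only [vecMul, dotProduct, B, of_apply, hG]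
  have hcol : (fun b => G (sp b) t) = A *ᵥ fun k => v k t := by
    ext b; simp only [mulVec, dotProduct, A, of_apply, hG]
  rw [pivot_eq_mul hG] at hM ⊢
  rw [hrow, hcol, dotProduct_mulVec, vecMul_vecMul, dotProduct_mulVec, vecMul_vecMul,
    mul_inv_mul_mul_cancel hM, vecMul_one, hG]
  rfl

end CrossApproximation

theorem skeleton_finite_rank_exact_general
    (r : ℕ) (G : ℝ → ℝ → ℝ) (u v : Fin r → ℝ → ℝ)
    (hG : ∀ s t, G s t = ∑ k, u k s * v k t)
    (sp tp : Fin r → ℝ)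
    (M : Matrix (Fin r) (Fin r) ℝ) (hM : ∀ a b, M a b = G (sp a) (tp b))
    (hMinv : IsUnit M.det) :
    ∀ s ∈ Set.Icc (0:ℝ) 1, ∀ t ∈ Set.Icc (0:ℝ) 1,
      G s t = ∑ a, ∑ b, G s (tp a) * M⁻¹ a b * G (sp b) t := by
  intro s _ t _
  obtain rfl : M = Matrix.of fun a b => G (sp a) (tp b) := Matrix.ext hM
  rw [cross_approximation_exact hG hMinv s t]
  simp only [dotProduct, mulVec, Finset.mul_sum, mul_assoc]

/-- Skeleton approximation exactness for finite-rank functions: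
if `G(s,t) = ∑ₖ uₖ(s)vₖ(t)` and the pivot matrix `M(a,b) = G(sₐ,t_b)` is
invertible, then `G(s,t) = g_row(s) M⁻¹ g_col(t)` for all `(s,t) ∈ [0,1]²`,
where `g_row(s) = (G(s,t₁),…,G(s,t_r))` and `g_col(t) = (G(s₁,t),…,G(s_r,t))ᵀ`. -/
theorem skeleton_finite_rank_exact
    (r : ℕ) (G : ℝ → ℝ → ℝ) (u v : Fin r → ℝ → ℝ)
    (hG : ∀ s t, G s t = ∑ k, u k s * v k t)
    (sp tp : Fin r → ℝ)
    (hsp : ∀ a, sp a ∈ Set.Icc (0:ℝ) 1) (htp : ∀ a, tp a ∈ Set.Icc (0:ℝ) 1)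
    (M : Matrix (Fin r) (Fin r) ℝ) (hM : ∀ a b, M a b = G (sp a) (tp b))
    (hMinv : IsUnit M.det) :
    ∀ s ∈ Set.Icc (0:ℝ) 1, ∀ t ∈ Set.Icc (0:ℝ) 1,
      G s t = ∑ a, ∑ b, G s (tp a) * M⁻¹ a b * G (sp b) t :=
  skeleton_finite_rank_exact_general r G u v hG sp tp M hM hMinv
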